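/- Let Q, A, S_e, S_d, X, Y be finite random variables with joint law P_Q·P_{A|Q}·P_{S_e,S_d|A}·P_{X|A,S_e,Q}·P_{Y|X,S_e,S_d}. Then I(X; Y,S_d | A, Q) − I(X; S_e | A, Q) ≤ I(X; Y,S_d | A) − I(X; S_e | A), where the right-hand quantities are computed with respect to the marginal of (A,S_e,S_d,X,Y). -/

import Mathlib

open Finset
noncomputable section
namespace IT

variable {Ω : Type} [Fintype Ω]

/-- Marginal probability mass of the event `X = a` under the weight function `p`. -/
def marg {α : Type} [Fintype α] [DecidableEq α]
    (p : Ω → ℝ) (X : Ω → α) (a : α) : ℝ :=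
  ∑ ω, if X ω = a then p ω else 0

/-- Shannon entropy (natural logarithm) of the random variable `X`. -/
def ent {α : Type} [Fintype α] [DecidableEq α] (p : Ω → ℝ) (X : Ω → α) : ℝ :=
  ∑ a, Real.negMulLog (marg p X a)

/-- Conditional entropy `H(X | Y)`. -/
def condEnt {α β : Type} [Fintype α] [DecidableEq α] [Fintype β] [DecidableEq β]
    (p : Ω → ℝ) (X : Ω → α) (Y : Ω → β) : ℝ :=
  ent p (fun ω => (X ω, Y ω)) - ent p Y

/-- Mutual information `I(X; Y)`. -/
def mi {α β : Type} [Fintype α] [DecidableEq α] [Fintype β] [DecidableEq β]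
    (p : Ω → ℝ) (X : Ω → α) (Y : Ω → β) : ℝ :=
  ent p X + ent p Y - ent p (fun ω => (X ω, Y ω))

/-- Conditional mutual information `I(X; Y | Z)`. -/
def condMI {α β γ : Type} [Fintype α] [DecidableEq α] [Fintype β] [DecidableEq β]
    [Fintype γ] [DecidableEq γ]
    (p : Ω → ℝ) (X : Ω → α) (Y : Ω → β) (Z : Ω → γ) : ℝ :=
  condEnt p X Z + condEnt p Y Z - condEnt p (fun ω => (X ω, Y ω)) Z

/-- `X` and `Y` are conditionally independent given `Z`:
`P(X=a, Z=c) ⬝ P(Y=b, Z=c) = P(X=a, Y=b, Z=c) ⬝ P(Z=c)`. -/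
def CondIndep {α β γ : Type} [Fintype α] [DecidableEq α] [Fintype β] [DecidableEq β]
    [Fintype γ] [DecidableEq γ]
    (p : Ω → ℝ) (X : Ω → α) (Y : Ω → β) (Z : Ω → γ) : Prop :=
  ∀ a b c,
    marg p (fun ω => (X ω, Z ω)) (a, c) * marg p (fun ω => (Y ω, Z ω)) (b, c) =
    marg p (fun ω => (X ω, Y ω, Z ω)) (a, b, c) * marg p Z c

/-- `p` is a probability mass function on `Ω`. -/
def IsProb (p : Ω → ℝ) : Prop := (∀ ω, 0 ≤ p ω) ∧ ∑ ω, p ω = 1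

end IT


/-! Write `W = (Y, S_d)`. Expanding conditional mutual informations into entropies, the
right-hand side minus the left-hand side equals
`I(W;Q|A) − I(S_e;Q|A) + I(S_e;Q|W,X,A) − I(W;Q|S_e,X,A)`.
The factorization makes `S_e ⊥ Q | A` and `W ⊥ Q | (S_e,X,A)`, so the two subtracted terms
vanish, while the other two are nonnegative by Gibbs' inequality. -/

namespace IT

variable {Ω α β γ δ : Type} [Fintype Ω]
  [Fintype α] [DecidableEq α] [Fintype β] [DecidableEq β]
  [Fintype γ] [DecidableEq γ] [Fintype δ] [DecidableEq δ]
  (p : Ω → ℝ)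

def atomMass (X : Ω → α) (ω : Ω) : ℝ := marg p X (X ω)

lemma marg_nonneg (hp : ∀ ω, 0 ≤ p ω) (X : Ω → α) (a : α) : 0 ≤ marg p X a :=
  Finset.sum_nonneg fun ω _ => by split <;> simp [hp ω]

lemma le_atomMass (hp : ∀ ω, 0 ≤ p ω) (X : Ω → α) (ω : Ω) : p ω ≤ atomMass p X ω := by
  simpa [atomMass, marg] using
    Finset.single_le_sum (f := fun ω' => if X ω' = X ω then p ω' else 0)
      (fun ω' _ => by split <;> simp [hp ω']) (Finset.mem_univ ω)

lemma atomMass_pos (hp : ∀ ω, 0 ≤ p ω) (X : Ω → α) {ω : Ω} (hω : 0 < p ω) :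
    0 < atomMass p X ω :=
  hω.trans_le (le_atomMass p hp X ω)

lemma atomMass_eq_of_same_fibers {X : Ω → α} {Y : Ω → β}
    (h : ∀ ω ω', X ω' = X ω ↔ Y ω' = Y ω) : atomMass p X = atomMass p Y := by
  funext ω
  simp only [atomMass, marg, h ω]

lemma marg_apply_of_injective {X : Ω → α} (hX : Function.Injective X) (ω : Ω) :
    marg p X (X ω) = p ω := by
  rw [marg, Finset.sum_eq_single_of_mem ω (Finset.mem_univ ω)
    fun ω' _ hω' => by simp [hX.ne hω'], if_pos rfl]

lemma sum_marg (X : Ω → α) : ∑ a, marg p X a = ∑ ω, p ω := by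
  unfold marg
  rw [Finset.sum_comm]
  simp

lemma sum_mul_comp_eq_sum_marg_mul (X : Ω → α) (g : α → ℝ) :
    ∑ ω, p ω * g (X ω) = ∑ a, marg p X a * g a := by
  simp only [marg, Finset.sum_mul, ite_mul, zero_mul]
  rw [Finset.sum_comm]
  simp

lemma marg_sum_fst (X : Ω → α) (Y : Ω → β) (b : β) :
    ∑ a, marg p (fun ω => (X ω, Y ω)) (a, b) = marg p Y b := by
  unfold marg
  rw [Finset.sum_comm]
  refine Finset.sum_congr rfl fun ω _ => ?_
  by_cases hb : Y ω = b <;> simp [hb]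

lemma marg_sum_mid (X : Ω → α) (Y : Ω → β) (Z : Ω → γ) (a : α) (c : γ) :
    ∑ b, marg p (fun ω => (X ω, Y ω, Z ω)) (a, b, c) =
      marg p (fun ω => (X ω, Z ω)) (a, c) := by
  unfold marg
  rw [Finset.sum_comm]
  refine Finset.sum_congr rfl fun ω _ => ?_
  by_cases h : X ω = a ∧ Z ω = c
  · simp [h.1, h.2]
  · rcases not_and_or.mp h with h | h <;> simp [h]

lemma ent_eq_neg_sum_mul_log_atomMass (X : Ω → α) :
    ent p X = -∑ ω, p ω * Real.log (atomMass p X ω) := by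
  unfold atomMass
  rw [sum_mul_comp_eq_sum_marg_mul p X fun a => Real.log (marg p X a), ent,
    ← Finset.sum_neg_distrib]
  simp only [Real.negMulLog, neg_mul]

lemma ent_eq_of_same_fibers {X : Ω → α} {Y : Ω → β}
    (h : ∀ ω ω', X ω' = X ω ↔ Y ω' = Y ω) : ent p X = ent p Y := by
  simp only [ent_eq_neg_sum_mul_log_atomMass, atomMass_eq_of_same_fibers p h]

def condInfoDensity (X : Ω → α) (Y : Ω → β) (Z : Ω → γ) (ω : Ω) : ℝ :=
  Real.log (atomMass p (fun ω => (X ω, Y ω, Z ω)) ω) + Real.log (atomMass p Z ω)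
    - Real.log (atomMass p (fun ω => (X ω, Z ω)) ω)
    - Real.log (atomMass p (fun ω => (Y ω, Z ω)) ω)

lemma condMI_eq_sum_mul_condInfoDensity (X : Ω → α) (Y : Ω → β) (Z : Ω → γ) :
    condMI p X Y Z = ∑ ω, p ω * condInfoDensity p X Y Z ω := by
  have hXYZ : atomMass p (fun ω => ((X ω, Y ω), Z ω)) =
      atomMass p (fun ω => (X ω, Y ω, Z ω)) :=
    atomMass_eq_of_same_fibers p fun _ _ => by simp only [Prod.mk.injEq]; tauto
  simp only [condMI, condEnt, condInfoDensity, ent_eq_neg_sum_mul_log_atomMass, hXYZ,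
    mul_sub, mul_add, Finset.sum_sub_distrib, Finset.sum_add_distrib]
  ring

lemma condMI_eq_zero_of_condIndep (hp : ∀ ω, 0 ≤ p ω) {X : Ω → α} {Y : Ω → β} {Z : Ω → γ}
    (h : CondIndep p X Y Z) : condMI p X Y Z = 0 := by
  rw [condMI_eq_sum_mul_condInfoDensity]
  refine Finset.sum_eq_zero fun ω _ => ?_
  rcases (hp ω).eq_or_lt with hω | hω
  · rw [← hω, zero_mul]
  have pos {δ : Type} [Fintype δ] [DecidableEq δ] (W : Ω → δ) := atomMass_pos p hp W hω
  have hind : atomMass p (fun ω => (X ω, Z ω)) ω * atomMass p (fun ω => (Y ω, Z ω)) ω =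
      atomMass p (fun ω => (X ω, Y ω, Z ω)) ω * atomMass p Z ω := h (X ω) (Y ω) (Z ω)
  have hlog := congrArg Real.log hind
  rw [Real.log_mul (pos _).ne' (pos _).ne', Real.log_mul (pos _).ne' (pos Z).ne'] at hlog
  rw [condInfoDensity]
  linear_combination (-p ω) * hlog

lemma sum_mul_atomMass_ratio_le (hp : ∀ ω, 0 ≤ p ω) (X : Ω → α) (Y : Ω → β) (Z : Ω → γ) :
    ∑ ω, p ω * (atomMass p (fun ω => (X ω, Z ω)) ω * atomMass p (fun ω => (Y ω, Z ω)) ω /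
      (atomMass p (fun ω => (X ω, Y ω, Z ω)) ω * atomMass p Z ω)) ≤ ∑ ω, p ω := by
  let mXZ := marg p (fun ω => (X ω, Z ω))
  let mYZ := marg p (fun ω => (Y ω, Z ω))
  let mXYZ := marg p (fun ω => (X ω, Y ω, Z ω))
  calc _ = ∑ w : α × β × γ, mXYZ w *
          (mXZ (w.1, w.2.2) * mYZ (w.2.1, w.2.2) / (mXYZ w * marg p Z w.2.2)) :=
        sum_mul_comp_eq_sum_marg_mul p (fun ω => (X ω, Y ω, Z ω)) fun w =>
          mXZ (w.1, w.2.2) * mYZ (w.2.1, w.2.2) / (mXYZ w * marg p Z w.2.2)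
    _ ≤ ∑ w : α × β × γ, mXZ (w.1, w.2.2) * mYZ (w.2.1, w.2.2) / marg p Z w.2.2 := by
        refine Finset.sum_le_sum fun w _ => ?_
        rcases (show 0 ≤ mXYZ w from marg_nonneg p hp _ w).eq_or_lt with h0 | hpos
        · rw [← h0, zero_mul]
          exact div_nonneg (mul_nonneg (marg_nonneg p hp _ _) (marg_nonneg p hp _ _))
            (marg_nonneg p hp _ _)
        · rw [← mul_div_assoc, mul_div_mul_left _ _ hpos.ne']
    _ = ∑ c, (∑ a, mXZ (a, c)) * (∑ b, mYZ (b, c)) / marg p Z c := by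
        simp only [Fintype.sum_prod_type, Finset.sum_mul_sum, Finset.sum_div]
        exact (Finset.sum_congr rfl fun a _ => Finset.sum_comm).trans Finset.sum_comm
    _ = ∑ ω, p ω := by
        simp only [mXZ, mYZ, marg_sum_fst, mul_self_div_self, sum_marg]

lemma condMI_nonneg (hp : ∀ ω, 0 ≤ p ω) (X : Ω → α) (Y : Ω → β) (Z : Ω → γ) :
    0 ≤ condMI p X Y Z := by
  let r : Ω → ℝ := fun ω =>
    atomMass p (fun ω => (X ω, Z ω)) ω * atomMass p (fun ω => (Y ω, Z ω)) ω /
      (atomMass p (fun ω => (X ω, Y ω, Z ω)) ω * atomMass p Z ω)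
  have gibbs : ∀ ω, p ω * (1 - r ω) ≤ p ω * condInfoDensity p X Y Z ω := by
    intro ω
    rcases (hp ω).eq_or_lt with hω | hω
    · rw [← hω, zero_mul, zero_mul]
    have pos {δ : Type} [Fintype δ] [DecidableEq δ] (W : Ω → δ) := atomMass_pos p hp W hω
    have hnum := mul_pos (pos fun ω => (X ω, Z ω)) (pos fun ω => (Y ω, Z ω))
    have hden := mul_pos (pos fun ω => (X ω, Y ω, Z ω)) (pos Z)
    have hlog := Real.log_le_sub_one_of_pos (div_pos hnum hden)
    rw [Real.log_div hnum.ne' hden.ne', Real.log_mul (pos _).ne' (pos _).ne',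
      Real.log_mul (pos _).ne' (pos Z).ne'] at hlog
    exact mul_le_mul_of_nonneg_left (by rw [condInfoDensity]; linarith) hω.le
  rw [condMI_eq_sum_mul_condInfoDensity]
  calc 0 ≤ ∑ ω, p ω - ∑ ω, p ω * r ω :=
        sub_nonneg.mpr (sum_mul_atomMass_ratio_le p hp X Y Z)
    _ = ∑ ω, p ω * (1 - r ω) := by simp only [mul_sub, mul_one, Finset.sum_sub_distrib]
    _ ≤ _ := Finset.sum_le_sum fun ω _ => gibbs ω

lemma condMI_sub_condMI_prod_comm (X : Ω → α) (Y : Ω → β) (Z : Ω → γ) (Q : Ω → δ) :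
    condMI p X Y Z - condMI p X Y (fun ω => (Z ω, Q ω)) =
      condMI p Y Q Z - condMI p Y Q (fun ω => (X ω, Z ω)) := by
  have e₁ : ent p (fun ω => (X ω, Z ω, Q ω)) = ent p (fun ω => (Q ω, X ω, Z ω)) :=
    ent_eq_of_same_fibers p fun _ _ => by simp only [Prod.mk.injEq]; tauto
  have e₂ : ent p (fun ω => (Y ω, Z ω, Q ω)) = ent p (fun ω => ((Y ω, Q ω), Z ω)) :=
    ent_eq_of_same_fibers p fun _ _ => by simp only [Prod.mk.injEq]; tauto
  have e₃ : ent p (fun ω => ((X ω, Y ω), Z ω, Q ω)) =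
      ent p (fun ω => ((Y ω, Q ω), X ω, Z ω)) :=
    ent_eq_of_same_fibers p fun _ _ => by simp only [Prod.mk.injEq]; tauto
  have e₄ : ent p (fun ω => (Z ω, Q ω)) = ent p (fun ω => (Q ω, Z ω)) :=
    ent_eq_of_same_fibers p fun _ _ => by simp only [Prod.mk.injEq]; tauto
  have e₅ : ent p (fun ω => ((X ω, Y ω), Z ω)) = ent p (fun ω => (Y ω, X ω, Z ω)) :=
    ent_eq_of_same_fibers p fun _ _ => by simp only [Prod.mk.injEq]; tauto
  simp only [condMI, condEnt]
  linarith

lemma condMI_add_condMI_prod_comm (X : Ω → α) (Y : Ω → β) (Q : Ω → γ) (Z : Ω → δ) :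
    condMI p X Q Z + condMI p Y Q (fun ω => (X ω, Z ω)) =
      condMI p Y Q Z + condMI p X Q (fun ω => (Y ω, Z ω)) := by
  have e₁ : ent p (fun ω => ((X ω, Q ω), Z ω)) = ent p (fun ω => (Q ω, X ω, Z ω)) :=
    ent_eq_of_same_fibers p fun _ _ => by simp only [Prod.mk.injEq]; tauto
  have e₂ : ent p (fun ω => (Y ω, X ω, Z ω)) = ent p (fun ω => (X ω, Y ω, Z ω)) :=
    ent_eq_of_same_fibers p fun _ _ => by simp only [Prod.mk.injEq]; tauto
  have e₃ : ent p (fun ω => ((Y ω, Q ω), X ω, Z ω)) =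
      ent p (fun ω => ((X ω, Q ω), Y ω, Z ω)) :=
    ent_eq_of_same_fibers p fun _ _ => by simp only [Prod.mk.injEq]; tauto
  have e₄ : ent p (fun ω => (Q ω, Y ω, Z ω)) = ent p (fun ω => ((Y ω, Q ω), Z ω)) :=
    ent_eq_of_same_fibers p fun _ _ => by simp only [Prod.mk.injEq]; tauto
  simp only [condMI, condEnt]
  linarith

lemma condIndep_of_marg_eq_mul {X : Ω → α} {Y : Ω → β} {Z : Ω → γ}
    (f : α → γ → ℝ) (g : β → γ → ℝ)
    (h : ∀ a b c, marg p (fun ω => (X ω, Y ω, Z ω)) (a, b, c) = f a c * g b c) :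
    CondIndep p X Y Z := by
  intro a b c
  have hXZ : marg p (fun ω => (X ω, Z ω)) (a, c) = f a c * ∑ b, g b c := by
    rw [← marg_sum_mid p X Y Z, Finset.mul_sum]
    exact Finset.sum_congr rfl fun b _ => h a b c
  have hYZ (b : β) : marg p (fun ω => (Y ω, Z ω)) (b, c) = (∑ a, f a c) * g b c := by
    rw [← marg_sum_fst p X (fun ω => (Y ω, Z ω)), Finset.sum_mul]
    exact Finset.sum_congr rfl fun a _ => h a b c
  have hZ : marg p Z c = (∑ a, f a c) * ∑ b, g b c := by
    rw [← marg_sum_fst p Y Z, Finset.mul_sum]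
    exact Finset.sum_congr rfl fun b _ => hYZ b
  rw [hXZ, hYZ, hZ, h]
  ring

end IT

section Factorization

variable {Qt At Et Dt Xt Yt : Type} {p : Qt × At × Et × Dt × Xt × Yt → ℝ}
  {PQ : Qt → ℝ} {PA : At → Qt → ℝ} {PS : Et × Dt → At → ℝ}
  {PX : Xt → At → Et → Qt → ℝ} {PY : Yt → Xt → Et → Dt → ℝ}

lemma nonneg_of_factorization
    (hPQ0 : ∀ q, 0 ≤ PQ q) (hPA0 : ∀ a q, 0 ≤ PA a q) (hPS0 : ∀ s a, 0 ≤ PS s a)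
    (hPX0 : ∀ x a e q, 0 ≤ PX x a e q) (hPY0 : ∀ y x e d, 0 ≤ PY y x e d)
    (hfac : ∀ q a e d x y,
      p (q, a, e, d, x, y) = PQ q * PA a q * PS (e, d) a * PX x a e q * PY y x e d) :
    ∀ ω, 0 ≤ p ω := by
  rintro ⟨q, a, e, d, x, y⟩
  rw [hfac]
  exact mul_nonneg (mul_nonneg (mul_nonneg (mul_nonneg (hPQ0 q) (hPA0 a q)) (hPS0 (e, d) a))
    (hPX0 x a e q)) (hPY0 y x e d)

lemma condIndep_Se_Q_of_factorization [Fintype Qt] [DecidableEq Qt] [Fintype At]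
    [DecidableEq At] [Fintype Et] [DecidableEq Et] [Fintype Dt] [Fintype Xt] [Fintype Yt]
    (hPX1 : ∀ a e q, ∑ x, PX x a e q = 1) (hPY1 : ∀ x e d, ∑ y, PY y x e d = 1)
    (hfac : ∀ q a e d x y,
      p (q, a, e, d, x, y) = PQ q * PA a q * PS (e, d) a * PX x a e q * PY y x e d) :
    IT.CondIndep p (fun ω => ω.2.2.1) (fun ω => ω.1) (fun ω => ω.2.1) := by
  refine IT.condIndep_of_marg_eq_mul p (fun e a => ∑ d, PS (e, d) a) (fun q a => PQ q * PA a q)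
    fun e q a => ?_
  simp only [IT.marg, Fintype.sum_prod_type, hfac, Prod.mk.injEq, ite_and,
    Finset.sum_ite_irrel, ← Finset.mul_sum, hPY1, hPX1, mul_one, Finset.sum_const_zero,
    Finset.sum_ite_eq', Finset.mem_univ, if_true]
  ring

lemma condIndep_YSd_Q_of_factorization [Fintype Qt] [DecidableEq Qt] [Fintype At]
    [DecidableEq At] [Fintype Et] [DecidableEq Et] [Fintype Dt] [DecidableEq Dt]
    [Fintype Xt] [DecidableEq Xt] [Fintype Yt] [DecidableEq Yt]
    (hfac : ∀ q a e d x y,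
      p (q, a, e, d, x, y) = PQ q * PA a q * PS (e, d) a * PX x a e q * PY y x e d) :
    IT.CondIndep p (fun ω => (ω.2.2.2.2.2, ω.2.2.2.1)) (fun ω => ω.1)
      (fun ω => (ω.2.2.1, ω.2.2.2.2.1, ω.2.1)) := by
  refine IT.condIndep_of_marg_eq_mul p
    (fun w z => PS (z.1, w.2) z.2.2 * PY w.1 z.2.1 z.1 w.2)
    (fun q z => PQ q * PA z.2.2 q * PX z.2.1 z.2.2 z.1 q) ?_
  have hinj : Function.Injective fun ω : Qt × At × Et × Dt × Xt × Yt =>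
      ((ω.2.2.2.2.2, ω.2.2.2.1), ω.1, ω.2.2.1, ω.2.2.2.2.1, ω.2.1) := by
    rintro ⟨q, a, e, d, x, y⟩ ⟨q', a', e', d', x', y'⟩ h
    simp_all
  rintro ⟨y, d⟩ q ⟨e, x, a⟩
  rw [IT.marg_apply_of_injective p hinj (q, a, e, d, x, y), hfac]
  ring

end Factorization

section TimeSharing
variable {Qt At Et Dt Xt Yt : Type}
  [Fintype Qt] [DecidableEq Qt] [Fintype At] [DecidableEq At]
  [Fintype Et] [DecidableEq Et] [Fintype Dt] [DecidableEq Dt]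
  [Fintype Xt] [DecidableEq Xt] [Fintype Yt] [DecidableEq Yt]

theorem stmt17_general
    (p : Qt × At × Et × Dt × Xt × Yt → ℝ)
    (PQ : Qt → ℝ) (PA : At → Qt → ℝ) (PS : Et × Dt → At → ℝ)
    (PX : Xt → At → Et → Qt → ℝ) (PY : Yt → Xt → Et → Dt → ℝ)
    (hPQ0 : ∀ q, 0 ≤ PQ q)
    (hPA0 : ∀ a q, 0 ≤ PA a q)
    (hPS0 : ∀ s a, 0 ≤ PS s a)
    (hPX0 : ∀ x a e q, 0 ≤ PX x a e q) (hPX1 : ∀ a e q, ∑ x, PX x a e q = 1)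
    (hPY0 : ∀ y x e d, 0 ≤ PY y x e d) (hPY1 : ∀ x e d, ∑ y, PY y x e d = 1)
    (hfac : ∀ q a e d x y,
      p (q, a, e, d, x, y) = PQ q * PA a q * PS (e, d) a * PX x a e q * PY y x e d) :
    IT.condMI p (fun ω => ω.2.2.2.2.1) (fun ω => (ω.2.2.2.2.2, ω.2.2.2.1))
        (fun ω => (ω.2.1, ω.1))
      - IT.condMI p (fun ω => ω.2.2.2.2.1) (fun ω => ω.2.2.1) (fun ω => (ω.2.1, ω.1))
    ≤ IT.condMI p (fun ω => ω.2.2.2.2.1) (fun ω => (ω.2.2.2.2.2, ω.2.2.2.1))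
        (fun ω => ω.2.1)
      - IT.condMI p (fun ω => ω.2.2.2.2.1) (fun ω => ω.2.2.1) (fun ω => ω.2.1) := by
  have hp := nonneg_of_factorization hPQ0 hPA0 hPS0 hPX0 hPY0 hfac
  let Q := fun ω : Qt × At × Et × Dt × Xt × Yt => ω.1
  let A := fun ω : Qt × At × Et × Dt × Xt × Yt => ω.2.1
  let E := fun ω : Qt × At × Et × Dt × Xt × Yt => ω.2.2.1
  let X := fun ω : Qt × At × Et × Dt × Xt × Yt => ω.2.2.2.2.1
  let W := fun ω : Qt × At × Et × Dt × Xt × Yt => (ω.2.2.2.2.2, ω.2.2.2.1)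
  have key₁ := IT.condMI_sub_condMI_prod_comm p X W A Q
  have key₂ := IT.condMI_sub_condMI_prod_comm p X E A Q
  have key₃ := IT.condMI_add_condMI_prod_comm p E W Q (fun ω => (X ω, A ω))
  have h₁ := IT.condMI_nonneg p hp W Q A
  have h₂ := IT.condMI_nonneg p hp E Q (fun ω => (W ω, X ω, A ω))
  have h₃ := IT.condMI_eq_zero_of_condIndep p hp
    (condIndep_Se_Q_of_factorization hPX1 hPY1 hfac)
  have h₄ := IT.condMI_eq_zero_of_condIndep p hp (condIndep_YSd_Q_of_factorization hfac)
  linarith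

/-- `I(X; Y,S_d | A,Q) − I(X; S_e | A,Q) ≤ I(X; Y,S_d | A) − I(X; S_e | A)`. -/
theorem stmt17
    (p : Qt × At × Et × Dt × Xt × Yt → ℝ)
    (PQ : Qt → ℝ) (PA : At → Qt → ℝ) (PS : Et × Dt → At → ℝ)
    (PX : Xt → At → Et → Qt → ℝ) (PY : Yt → Xt → Et → Dt → ℝ)
    (hPQ0 : ∀ q, 0 ≤ PQ q) (hPQ1 : ∑ q, PQ q = 1)
    (hPA0 : ∀ a q, 0 ≤ PA a q) (hPA1 : ∀ q, ∑ a, PA a q = 1)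
    (hPS0 : ∀ s a, 0 ≤ PS s a) (hPS1 : ∀ a, ∑ s, PS s a = 1)
    (hPX0 : ∀ x a e q, 0 ≤ PX x a e q) (hPX1 : ∀ a e q, ∑ x, PX x a e q = 1)
    (hPY0 : ∀ y x e d, 0 ≤ PY y x e d) (hPY1 : ∀ x e d, ∑ y, PY y x e d = 1)
    (hfac : ∀ q a e d x y,
      p (q, a, e, d, x, y) = PQ q * PA a q * PS (e, d) a * PX x a e q * PY y x e d) :
    IT.condMI p (fun ω => ω.2.2.2.2.1) (fun ω => (ω.2.2.2.2.2, ω.2.2.2.1))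
        (fun ω => (ω.2.1, ω.1))
      - IT.condMI p (fun ω => ω.2.2.2.2.1) (fun ω => ω.2.2.1) (fun ω => (ω.2.1, ω.1))
    ≤ IT.condMI p (fun ω => ω.2.2.2.2.1) (fun ω => (ω.2.2.2.2.2, ω.2.2.2.1))
        (fun ω => ω.2.1)
      - IT.condMI p (fun ω => ω.2.2.2.2.1) (fun ω => ω.2.2.1) (fun ω => ω.2.1) :=
  stmt17_general p PQ PA PS PX PY hPQ0 hPA0 hPS0 hPX0 hPX1 hPY0 hPY1 hfac

end TimeSharing
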